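/- arXiv:2503.21053 — 4 statements merged into one kernel-verified Lean document; each statement's English description precedes it below -/
import Mathlib

section
/- Let (Ω, P) be a probability space, (ω_i)_{i=1}^{n} i.i.d. Ω-valued random elements, and let h : ℝⁿ¹ × Ω → ℝ be measurable in its second argument. Assume: (i) there are reals m ≤ M with m ≤ h(x, ω) ≤ M for all x and ω; (ii) for every ω, the map x ↦ h(x, ω) is Lipschitz with constant L > 0, and x ↦ E_ω[h(x, ω)] is Lipschitz with constant L. Let c : ℝⁿ¹ → ℝ, define f(x) = c(x) + E_ω[h(x, ω)] and f_n(x) = c(x) + (1/n)·Σ_{i=1}^{n} h(x, ω_i). Fix x̂ ∈ ℝⁿ¹, δ > 0, 0 < ε < 1 and κ ≥ 4L/δ. If n ≥ −8·log(ε/2)·(M−m)²/(κ²·δ⁴), then P( |f_n(x) − f(x)| ≤ κ·δ² for all x with ‖x − x̂‖ ≤ δ ) ≥ 1 − ε. -/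
/-!
Hoeffding's inequality for the i.i.d. sample at the centre `xhat` bounds the sampling error there
by `κ δ² / 2` except on an event of probability at most `ε`. On the ball, the two Lipschitz
conditions move this bound from `xhat` to `x` at an extra cost of `2 L δ ≤ κ δ² / 2`.
-/

open MeasureTheory ProbabilityTheory

namespace ProbabilityTheory.HasSubgaussianMGF

variable {Ω : Type*} {mΩ : MeasurableSpace Ω} {μ : Measure Ω} {X : Ω → ℝ} {c : NNReal}

/-- Stated through `log η` so that `c = 0` is covered: the variable then vanishes almost surely,
while `exp (-t ^ 2 / (2 * c))` is the junk value `1`. -/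
lemma measureReal_ge_le_of_log_le (hX : HasSubgaussianMGF X c μ) {t η : ℝ} (ht : 0 < t)
    (hη : 0 < η) (hct : -(2 * c * Real.log η) ≤ t ^ 2) :
    μ.real {ω | t ≤ X ω} ≤ η := by
  rcases eq_or_ne c 0 with rfl | hc
  · have hnull : μ {ω | t ≤ X ω} = 0 := by
      refine measure_mono_null (fun ω hω => ?_) hX.ae_eq_zero_of_hasSubgaussianMGF_zero
      exact fun h0 => (ht.trans_le hω).ne' h0
    simp [Measure.real, hnull, hη.le]
  · calc μ.real {ω | t ≤ X ω} ≤ Real.exp (-t ^ 2 / (2 * c)) := hX.measure_ge_le ht.le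
      _ ≤ Real.exp (Real.log η) := by
        gcongr
        rw [div_le_iff₀ (by positivity)]
        linarith
      _ = η := Real.exp_log hη

lemma measureReal_abs_ge_le_of_log_le (hX : HasSubgaussianMGF X c μ) {t η : ℝ} (ht : 0 < t)
    (hη : 0 < η) (hct : -(2 * c * Real.log η) ≤ t ^ 2) :
    μ.real {ω | t ≤ |X ω|} ≤ 2 * η := by
  have hsplit : {ω | t ≤ |X ω|} = {ω | t ≤ X ω} ∪ {ω | t ≤ (-X) ω} :=
    Set.ext fun ω => le_abs (a := t) (b := X ω)
  rw [hsplit, two_mul]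
  exact (measureReal_union_le _ _).trans (add_le_add
    (hX.measureReal_ge_le_of_log_le ht hη hct) (hX.neg.measureReal_ge_le_of_log_le ht hη hct))

end ProbabilityTheory.HasSubgaussianMGF

lemma hasSubgaussianMGF_comp_sub_integral {Θ Ω : Type*} [MeasurableSpace Θ] [MeasurableSpace Ω]
    {P : Measure Θ} {Q : Measure Ω} [IsProbabilityMeasure Q] {W : Θ → Ω} (hW : Measurable W)
    (hWQ : P.map W = Q) {g : Ω → ℝ} (hg : Measurable g) {a b : ℝ} (hab : ∀ ω, g ω ∈ Set.Icc a b) :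
    HasSubgaussianMGF (fun θ => g (W θ) - ∫ ω, g ω ∂Q) ((‖b - a‖₊ / 2) ^ 2) P := by
  have hQ := hasSubgaussianMGF_of_mem_Icc hg.aemeasurable (ae_of_all Q hab)
  rw [← hWQ] at hQ
  convert hQ.of_map hW.aemeasurable using 1
  simp [Function.comp_def, hWQ]

lemma measureReal_abs_mean_sub_integral_ge_le {Θ Ω : Type*} [MeasurableSpace Θ]
    [MeasurableSpace Ω] {P : Measure Θ} {Q : Measure Ω} [IsProbabilityMeasure Q] {n : ℕ}
    (hn : 0 < n) {W : Fin n → Θ → Ω} (hW : ∀ i, Measurable (W i)) (hindep : iIndepFun W P)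
    (hWQ : ∀ i, P.map (W i) = Q) {g : Ω → ℝ} (hg : Measurable g) {a b : ℝ}
    (hab : ∀ ω, g ω ∈ Set.Icc a b) {t η : ℝ} (ht : 0 < t) (hη : 0 < η)
    (hsize : -Real.log (η / 2) * (b - a) ^ 2 ≤ 2 * n * t ^ 2) :
    P.real {θ | t ≤ |1 / (n : ℝ) * ∑ i, g (W i θ) - ∫ ω, g ω ∂Q|} ≤ η := by
  have hn' : (0 : ℝ) < n := Nat.cast_pos.2 hn
  have hsum : HasSubgaussianMGF (fun θ => ∑ i, (g (W i θ) - ∫ ω, g ω ∂Q))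
      (∑ _i : Fin n, (‖b - a‖₊ / 2) ^ 2) P :=
    HasSubgaussianMGF.sum_of_iIndepFun (X := fun i θ => g (W i θ) - ∫ ω, g ω ∂Q)
      (hindep.comp _ fun _ => hg.sub_const _) fun i _ =>
        hasSubgaussianMGF_comp_sub_integral (hW i) (hWQ i) hg hab
  have hc : ((∑ _i : Fin n, (‖b - a‖₊ / 2) ^ 2 : NNReal) : ℝ) = n * (b - a) ^ 2 / 4 := by
    simp only [NNReal.coe_sum, NNReal.coe_pow, NNReal.coe_div, NNReal.coe_ofNat, coe_nnnorm,
      Real.norm_eq_abs]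
    rw [Finset.sum_const, Finset.card_univ, Fintype.card_fin, nsmul_eq_mul, div_pow, sq_abs]
    ring
  have hset : {θ | t ≤ |1 / (n : ℝ) * ∑ i, g (W i θ) - ∫ ω, g ω ∂Q|} =
      {θ | n * t ≤ |∑ i, (g (W i θ) - ∫ ω, g ω ∂Q)|} := by
    ext θ
    have hmean : 1 / (n : ℝ) * ∑ i, g (W i θ) - ∫ ω, g ω ∂Q =
        (∑ i, (g (W i θ) - ∫ ω, g ω ∂Q)) / n := by
      rw [Finset.sum_sub_distrib, Finset.sum_const, Finset.card_univ, Fintype.card_fin,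
        nsmul_eq_mul]
      field_simp
    show t ≤ _ ↔ (n : ℝ) * t ≤ _
    rw [hmean, abs_div, abs_of_pos hn', le_div_iff₀ hn', mul_comm]
  have htail := hsum.measureReal_abs_ge_le_of_log_le (t := n * t) (by positivity) (half_pos hη)
    (by rw [hc]; nlinarith [mul_le_mul_of_nonneg_left hsize hn'.le])
  rw [hset]
  linarith

lemma abs_mean_sub_le_of_lipschitz {E Ω : Type*} [SeminormedAddCommGroup E] {n : ℕ} (hn : 0 < n)
    {h : E → Ω → ℝ} {F : E → ℝ} {L : ℝ} (hL : 0 ≤ L)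
    (hLip : ∀ ω x y, |h x ω - h y ω| ≤ L * ‖x - y‖) (hLipF : ∀ x y, |F x - F y| ≤ L * ‖x - y‖)
    {x x₀ : E} {δ : ℝ} (hx : ‖x - x₀‖ ≤ δ) (ω : Fin n → Ω) :
    |1 / (n : ℝ) * ∑ i, h x (ω i) - F x| ≤
      |1 / (n : ℝ) * ∑ i, h x₀ (ω i) - F x₀| + 2 * (L * δ) := by
  have hn' : (0 : ℝ) < n := Nat.cast_pos.2 hn
  have hLδ : L * ‖x - x₀‖ ≤ L * δ := mul_le_mul_of_nonneg_left hx hL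
  have hsample : |1 / (n : ℝ) * ∑ i, h x (ω i) - 1 / (n : ℝ) * ∑ i, h x₀ (ω i)| ≤ L * δ := by
    rw [← mul_sub, ← Finset.sum_sub_distrib, abs_mul, abs_of_pos (one_div_pos.2 hn')]
    calc 1 / (n : ℝ) * |∑ i, (h x (ω i) - h x₀ (ω i))| ≤ 1 / (n : ℝ) * ∑ _i : Fin n, L * δ := by
          gcongr
          exact (Finset.abs_sum_le_sum_abs _ _).trans
            (Finset.sum_le_sum fun i _ => (hLip (ω i) x x₀).trans hLδ)
      _ = L * δ := by
          rw [Finset.sum_const, Finset.card_univ, Fintype.card_fin, nsmul_eq_mul]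
          field_simp
  have hmean : |F x₀ - F x| ≤ L * δ := by
    rw [abs_sub_comm]
    exact (hLipF x x₀).trans hLδ
  linarith [abs_sub_le (1 / (n : ℝ) * ∑ i, h x (ω i)) (1 / (n : ℝ) * ∑ i, h x₀ (ω i)) (F x),
    abs_sub_le (1 / (n : ℝ) * ∑ i, h x₀ (ω i)) (F x₀) (F x)]

lemma one_sub_probReal_le_probReal_compl {α : Type*} [MeasurableSpace α] {μ : Measure α}
    [IsProbabilityMeasure μ] (s : Set α) : 1 - μ.real s ≤ μ.real sᶜ := by
  have := measureReal_union_le (μ := μ) s sᶜ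
  rw [Set.union_compl_self, probReal_univ] at this
  linarith

theorem stmt2_general
    {Θ : Type*} [MeasurableSpace Θ] (P : Measure Θ) [IsProbabilityMeasure P]
    {Ω : Type*} [MeasurableSpace Ω] (Q : Measure Ω) [IsProbabilityMeasure Q]
    (n₁ : ℕ) (n : ℕ) (hn : 0 < n)
    (W : Fin n → Θ → Ω) (hWmeas : ∀ i, Measurable (W i))
    (hindep : iIndepFun W P)
    (hdist : ∀ i, Measure.map (W i) P = Q)
    (h : EuclideanSpace ℝ (Fin n₁) → Ω → ℝ)
    (hmeas : ∀ x, Measurable (h x))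
    (m M : ℝ)
    (hbdd : ∀ x ω, h x ω ∈ Set.Icc m M)
    (L : ℝ) (hL : 0 < L)
    (hLip : ∀ ω, ∀ x y, |h x ω - h y ω| ≤ L * ‖x - y‖)
    (hLipE : ∀ x y, |(∫ ω, h x ω ∂Q) - ∫ ω, h y ω ∂Q| ≤ L * ‖x - y‖)
    (c : EuclideanSpace ℝ (Fin n₁) → ℝ)
    (xhat : EuclideanSpace ℝ (Fin n₁)) (δ ε κ : ℝ)
    (hδ : 0 < δ) (hε : 0 < ε) (hε1 : ε < 1) (hκ : κ ≥ 4 * L / δ)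
    (hsize : (n : ℝ) ≥ -8 * Real.log (ε / 2) * (M - m) ^ 2 / (κ ^ 2 * δ ^ 4)) :
    (P {θ | ∀ x, ‖x - xhat‖ ≤ δ →
        |(c x + (1 / (n : ℝ)) * ∑ i, h x (W i θ)) -
          (c x + ∫ ω, h x ω ∂Q)| ≤ κ * δ ^ 2}).toReal ≥ 1 - ε := by
  have hLδ : 4 * L ≤ κ * δ := (div_le_iff₀ hδ).1 hκ
  have hκpos : 0 < κ := (by positivity : 0 < 4 * L / δ).trans_le hκ
  have hlog : Real.log (ε / 2) < 0 := Real.log_neg (half_pos hε) (by linarith)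
  rw [ge_iff_le, div_le_iff₀ (by positivity)] at hsize
  have hbad := measureReal_abs_mean_sub_integral_ge_le hn hWmeas hindep hdist (hmeas xhat)
    (hbdd xhat) (t := κ * δ ^ 2 / 2) (by positivity) hε
    (by nlinarith [mul_nonneg (sq_nonneg (M - m)) (neg_nonneg.2 hlog.le)])
  show 1 - ε ≤ P.real _
  refine (sub_le_sub_left hbad 1).trans <| (one_sub_probReal_le_probReal_compl _).trans <|
    measureReal_mono fun θ hθ x hx => ?_
  have hθ' : _ < κ * δ ^ 2 / 2 := not_le.1 hθ
  have hmove := abs_mean_sub_le_of_lipschitz hn hL.le hLip hLipE hx fun i => W i θ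
  rw [add_sub_add_left_eq_sub]
  nlinarith [mul_le_mul_of_nonneg_right hLδ hδ.le]

/-- Theorem 1 (sample complexity of SAA): with `f x = c x + E_ω[h x ω]`, the
recourse function `h` bounded in `[m, M]` and `L`-Lipschitz in `x`, and the
sample average approximation `f_n` built from `n` i.i.d. scenarios `W i`,
if `n ≥ -8 log(ε/2) (M-m)² / (κ² δ⁴)` and `κ ≥ 4L/δ`, then with probability
at least `1 - ε`, `|f_n x - f x| ≤ κ δ²` for all `x` in the ball `B(xhat, δ)`. -/
theorem stmt2
    {Θ : Type*} [MeasurableSpace Θ] (P : Measure Θ) [IsProbabilityMeasure P]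
    {Ω : Type*} [MeasurableSpace Ω] (Q : Measure Ω) [IsProbabilityMeasure Q]
    (n₁ : ℕ) (n : ℕ) (hn : 0 < n)
    (W : Fin n → Θ → Ω) (hWmeas : ∀ i, Measurable (W i))
    (hindep : iIndepFun W P)
    (hdist : ∀ i, Measure.map (W i) P = Q)
    (h : EuclideanSpace ℝ (Fin n₁) → Ω → ℝ)
    (hmeas : ∀ x, Measurable (h x))
    (m M : ℝ) (hmM : m ≤ M)
    (hbdd : ∀ x ω, h x ω ∈ Set.Icc m M)
    (L : ℝ) (hL : 0 < L)
    (hLip : ∀ ω, ∀ x y, |h x ω - h y ω| ≤ L * ‖x - y‖)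
    (hLipE : ∀ x y, |(∫ ω, h x ω ∂Q) - ∫ ω, h y ω ∂Q| ≤ L * ‖x - y‖)
    (c : EuclideanSpace ℝ (Fin n₁) → ℝ)
    (xhat : EuclideanSpace ℝ (Fin n₁)) (δ ε κ : ℝ)
    (hδ : 0 < δ) (hε : 0 < ε) (hε1 : ε < 1) (hκ : κ ≥ 4 * L / δ)
    (hsize : (n : ℝ) ≥ -8 * Real.log (ε / 2) * (M - m) ^ 2 / (κ ^ 2 * δ ^ 4)) :
    (P {θ | ∀ x, ‖x - xhat‖ ≤ δ →
        |(c x + (1 / (n : ℝ)) * ∑ i, h x (W i θ)) -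
          (c x + ∫ ω, h x ω ∂Q)| ≤ κ * δ ^ 2}).toReal ≥ 1 - ε :=
  stmt2_general P Q n₁ n hn W hWmeas hindep hdist h hmeas m M hbdd L hL hLip hLipE c xhat δ ε κ hδ
    hε hε1 hκ hsize
end

section
/- Let E be a real inner product space and let d, g ∈ E with d + g ≠ 0. Then the function λ ↦ (1/2)·‖λ·(−d) + (1−λ)·g‖² on ℝ attains its unique minimum at λ* = (⟨g, d⟩ + ‖g‖²)/(‖d‖² + ‖g‖² + 2·⟨g, d⟩). -/
/-!
Writing `v = d + g`, the objective is `‖g - λ • v‖² / 2`, the squared distance from `g` to a point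
of the line `ℝ • v`. Completing the square in `λ` gives
`‖g - λ • v‖² = ‖g - λ* • v‖² + (λ - λ*)² ‖v‖²` with `λ* = ⟪g, v⟫ / ‖v‖²`, which is the claimed
formula once `⟪g, d + g⟫` and `‖d + g‖²` are expanded.
-/

open RealInnerProductSpace

section LineProjection

variable {E : Type*} [NormedAddCommGroup E] [InnerProductSpace ℝ E]

theorem norm_sub_smul_sq_eq_add (g v : E) (hv : v ≠ 0) (t : ℝ) :
    ‖g - t • v‖ ^ 2 =
      ‖g - (⟪g, v⟫ / ‖v‖ ^ 2) • v‖ ^ 2 + (t - ⟪g, v⟫ / ‖v‖ ^ 2) ^ 2 * ‖v‖ ^ 2 := by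
  have hv2 : ‖v‖ ^ 2 ≠ 0 := pow_ne_zero 2 (norm_ne_zero_iff.mpr hv)
  simp only [norm_sub_sq_real, inner_smul_right, norm_smul, mul_pow, Real.norm_eq_abs, sq_abs]
  field_simp
  ring

theorem norm_sub_smul_sq_le (g v : E) (hv : v ≠ 0) (t : ℝ) :
    ‖g - (⟪g, v⟫ / ‖v‖ ^ 2) • v‖ ^ 2 ≤ ‖g - t • v‖ ^ 2 := by
  rw [norm_sub_smul_sq_eq_add g v hv t]
  exact le_add_of_nonneg_right (by positivity)

theorem norm_sub_smul_sq_lt {g v : E} (hv : v ≠ 0) {t : ℝ} (ht : t ≠ ⟪g, v⟫ / ‖v‖ ^ 2) :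
    ‖g - (⟪g, v⟫ / ‖v‖ ^ 2) • v‖ ^ 2 < ‖g - t • v‖ ^ 2 := by
  rw [norm_sub_smul_sq_eq_add g v hv t]
  have : 0 < ‖v‖ := norm_pos_iff.mpr hv
  have : (t - ⟪g, v⟫ / ‖v‖ ^ 2) ^ 2 ≠ 0 := pow_ne_zero 2 (sub_ne_zero.mpr ht)
  exact lt_add_of_pos_right _ (by positivity)

end LineProjection

theorem smul_neg_add_one_sub_smul {E : Type*} [AddCommGroup E] [Module ℝ E] (d g : E) (t : ℝ) :
    t • (-d) + (1 - t) • g = g - t • (d + g) := by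
  rw [smul_neg, sub_smul, one_smul, smul_add]
  abel

/-- Closed form of the optimal weight in the SCS direction-finding subproblem:
if `d + g ≠ 0`, the map `λ ↦ (1/2) ‖λ • (-d) + (1-λ) • g‖²` attains its unique
minimum over `ℝ` at `λ* = (⟪g, d⟫ + ‖g‖²) / (‖d‖² + ‖g‖² + 2 ⟪g, d⟫)`. -/
theorem stmt9 {E : Type*} [NormedAddCommGroup E] [InnerProductSpace ℝ E]
    (d g : E) (hne : d + g ≠ 0) (lamStar : ℝ)
    (hlam : lamStar = ((inner ℝ g d : ℝ) + ‖g‖ ^ 2) /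
      (‖d‖ ^ 2 + ‖g‖ ^ 2 + 2 * (inner ℝ g d : ℝ))) :
    (∀ lam : ℝ,
        (1 / 2) * ‖lamStar • (-d) + (1 - lamStar) • g‖ ^ 2 ≤
          (1 / 2) * ‖lam • (-d) + (1 - lam) • g‖ ^ 2) ∧
    (∀ lam : ℝ, lam ≠ lamStar →
        (1 / 2) * ‖lamStar • (-d) + (1 - lamStar) • g‖ ^ 2 <
          (1 / 2) * ‖lam • (-d) + (1 - lam) • g‖ ^ 2) := by
  obtain rfl : lamStar = ⟪g, d + g⟫ / ‖d + g‖ ^ 2 := by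
    rw [hlam, inner_add_right, real_inner_self_eq_norm_sq, norm_add_sq_real, real_inner_comm]
    ring_nf
  simp only [smul_neg_add_one_sub_smul]
  exact ⟨fun lam => mul_le_mul_of_nonneg_left (norm_sub_smul_sq_le g _ hne lam) (by norm_num),
    fun lam hlt => mul_lt_mul_of_pos_left (norm_sub_smul_sq_lt hne hlt) (by norm_num)⟩
end

section
/- Let d, g be elements of a real inner product space with ‖g‖ > ‖d‖ > 0 and let 0 < m₂ < 1/2. If −m₂·‖d‖² ≤ ⟨g, d⟩ ≤ 0, then λ* = (⟨g, d⟩ + ‖g‖²)/(‖d‖² + ‖g‖² + 2·⟨g, d⟩) ≥ 2/17. -/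
/-! The denominator is `‖d + g‖² > 0`, and `λ* - 1/2 = (‖g‖² - ‖d‖²) / (2 ‖d + g‖²)`, so
`‖g‖ > ‖d‖` alone already gives `λ* > 1/2 > 2/17`. -/

section

open RealInnerProductSpace

variable {E : Type*} [NormedAddCommGroup E] [InnerProductSpace ℝ E]

lemma norm_sq_add_norm_sq_add_two_inner_pos {d g : E} (hdg : ‖d‖ < ‖g‖) :
    0 < ‖d‖ ^ 2 + ‖g‖ ^ 2 + 2 * ⟪g, d⟫ := by
  have hsum : d + g ≠ 0 := by
    intro h
    rw [add_eq_zero_iff_eq_neg.mp h, norm_neg] at hdg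
    exact lt_irrefl _ hdg
  calc (0 : ℝ) < ‖d + g‖ ^ 2 := by positivity
    _ = ‖d‖ ^ 2 + ‖g‖ ^ 2 + 2 * ⟪g, d⟫ := by rw [norm_add_sq_real, real_inner_comm]; ring

lemma one_half_lt_inner_add_norm_sq_div {d g : E} (hdg : ‖d‖ < ‖g‖) :
    1 / 2 < (⟪g, d⟫ + ‖g‖ ^ 2) / (‖d‖ ^ 2 + ‖g‖ ^ 2 + 2 * ⟪g, d⟫) := by
  rw [lt_div_iff₀ (norm_sq_add_norm_sq_add_two_inner_pos hdg)]
  have : ‖d‖ ^ 2 < ‖g‖ ^ 2 := by gcongr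
  linarith

end

theorem stmt11_general {E : Type*} [NormedAddCommGroup E] [InnerProductSpace ℝ E]
    (d g : E) (hdg : ‖g‖ > ‖d‖) :
    ((inner ℝ g d : ℝ) + ‖g‖ ^ 2) / (‖d‖ ^ 2 + ‖g‖ ^ 2 + 2 * (inner ℝ g d : ℝ))
      ≥ 2 / 17 :=
  ((by norm_num : (2 : ℝ) / 17 < 1 / 2).trans (one_half_lt_inner_add_norm_sq_div hdg)).le

/-- Step in case (a) of the optimality Lemma: if `‖g‖ > ‖d‖ > 0`,
`0 < m₂ < 1/2` and `-m₂ ‖d‖² ≤ ⟪g, d⟫ ≤ 0`, then the optimal weight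
`λ* = (⟪g,d⟫ + ‖g‖²)/(‖d‖² + ‖g‖² + 2⟪g,d⟫)` is at least `2/17`. -/
theorem stmt11 {E : Type*} [NormedAddCommGroup E] [InnerProductSpace ℝ E]
    (d g : E) (hdg : ‖g‖ > ‖d‖) (hd : ‖d‖ > 0)
    (m₂ : ℝ) (hm₂0 : 0 < m₂) (hm₂1 : m₂ < 1 / 2)
    (h1 : -m₂ * ‖d‖ ^ 2 ≤ (inner ℝ g d : ℝ)) (h2 : (inner ℝ g d : ℝ) ≤ 0) :
    ((inner ℝ g d : ℝ) + ‖g‖ ^ 2) / (‖d‖ ^ 2 + ‖g‖ ^ 2 + 2 * (inner ℝ g d : ℝ))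
      ≥ 2 / 17 :=
  stmt11_general d g hdg
end

section
/- Let E be a finite-dimensional real inner product space, V ⊆ E a linear subspace with orthogonal projection P : E → V, and C ⊆ E a nonempty compact convex set. Let q̄ be the minimum-norm element of P(C) and assume q̄ ≠ 0. Then min over unit vectors d ∈ V (‖d‖ = 1) of sup_{q ∈ C} ⟨d, q⟩ equals −‖q̄‖; equivalently, −min_{d ∈ V, ‖d‖=1} max_{q ∈ C} ⟨d, q⟩ = ‖q̄‖. -/
/-! The minimum-norm element `q̄` of the convex set `P(C)` satisfies the variational inequality
`‖q̄‖² ≤ ⟪q̄, p⟫` on `P(C)`. Since `⟪d, P q⟫ = ⟪d, q⟫` for `d ∈ V`, the unit direction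
`-q̄ / ‖q̄‖ ∈ V` has support value exactly `-‖q̄‖` on `C`, while Cauchy–Schwarz gives
`⟪d, q̄⟫ ≥ -‖q̄‖` for every unit `d ∈ V`, so no unit direction does better. -/

open scoped RealInnerProductSpace

section

variable {E : Type*} [NormedAddCommGroup E] [InnerProductSpace ℝ E]

theorem Submodule.inner_starProjection_right_of_mem {𝕜 F : Type*} [RCLike 𝕜]
    [NormedAddCommGroup F] [InnerProductSpace 𝕜 F] (V : Submodule 𝕜 F)
    [V.HasOrthogonalProjection] {d : F} (hd : d ∈ V) (q : F) :
    inner 𝕜 d (V.starProjection q) = inner 𝕜 d q := by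
  rw [← V.inner_starProjection_left_eq_right, V.starProjection_eq_self_iff.mpr hd]

theorem norm_sq_le_inner_of_forall_norm_le {K : Set E} (hK : Convex ℝ K) {u : E} (hu : u ∈ K)
    (hmin : ∀ w ∈ K, ‖u‖ ≤ ‖w‖) {w : E} (hw : w ∈ K) : ‖u‖ ^ 2 ≤ ⟪u, w⟫ := by
  have : Nonempty K := ⟨⟨u, hu⟩⟩
  have hinf : ‖0 - u‖ = ⨅ w : K, ‖0 - (w : E)‖ := by
    refine le_antisymm (le_ciInf fun w => by simpa using hmin w w.2) ?_
    simpa using ciInf_le ⟨0, by rintro _ ⟨w, rfl⟩; positivity⟩ (⟨u, hu⟩ : K)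
  have h := (norm_eq_iInf_iff_real_inner_le_zero hK hu).mp hinf w hw
  rw [zero_sub, inner_neg_left, neg_nonpos, inner_sub_right, real_inner_self_eq_norm_sq] at h
  linarith

theorem sSup_inner_image_neg_inv_norm_smul {C : Set E} {u q₀ : E} (hu : u ≠ 0)
    (hle : ∀ q ∈ C, ‖u‖ ^ 2 ≤ ⟪u, q⟫) (hq₀ : q₀ ∈ C) (heq : ⟪u, q₀⟫ = ‖u‖ ^ 2) :
    sSup ((fun q => ⟪-(‖u‖⁻¹ • u), q⟫) '' C) = -‖u‖ := by
  have hu' : 0 < ‖u‖ := norm_pos_iff.mpr hu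
  have hval (q : E) : ⟪-(‖u‖⁻¹ • u), q⟫ = -(⟪u, q⟫ / ‖u‖) := by
    rw [inner_neg_left, real_inner_smul_left, inv_mul_eq_div]
  refine IsGreatest.csSup_eq ⟨⟨q₀, hq₀, ?_⟩, ?_⟩
  · dsimp only
    rw [hval, heq, sq, mul_div_cancel_right₀ _ hu'.ne']
  · rintro _ ⟨q, hq, rfl⟩
    dsimp only
    rw [hval, neg_le_neg_iff, le_div_iff₀ hu', ← sq]
    exact hle q hq

theorem neg_norm_starProjection_le_sSup_inner_image (V : Submodule ℝ E)
    [V.HasOrthogonalProjection] {C : Set E} (hC : IsCompact C) {d q : E} (hdV : d ∈ V)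
    (hd : ‖d‖ ≤ 1) (hq : q ∈ C) :
    -‖V.starProjection q‖ ≤ sSup ((fun q => ⟪d, q⟫) '' C) := by
  have hbdd : BddAbove ((fun q => ⟪d, q⟫) '' C) :=
    (hC.image (continuous_const.inner continuous_id)).bddAbove
  calc -‖V.starProjection q‖ ≤ -(‖d‖ * ‖V.starProjection q‖) :=
        neg_le_neg (mul_le_of_le_one_left (norm_nonneg _) hd)
    _ ≤ ⟪d, V.starProjection q⟫ := neg_le_of_abs_le (abs_real_inner_le_norm _ _)
    _ = ⟪d, q⟫ := V.inner_starProjection_right_of_mem hdV q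
    _ ≤ _ := le_csSup hbdd ⟨q, hq, rfl⟩

end

theorem stmt14_general {E : Type*} [NormedAddCommGroup E] [InnerProductSpace ℝ E]
    [FiniteDimensional ℝ E]
    (V : Submodule ℝ E) (C : Set E)
    (hCcomp : IsCompact C) (hCconv : Convex ℝ C)
    (qbar : E)
    (hqmem : qbar ∈ (fun x => (V.orthogonalProjection x : E)) '' C)
    (hqmin : ∀ q ∈ (fun x => (V.orthogonalProjection x : E)) '' C,
      ‖qbar‖ ≤ ‖q‖)
    (hq0 : qbar ≠ 0) :
    sInf ((fun d => sSup ((fun q => (inner ℝ d q : ℝ)) '' C)) ''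
        {d : E | d ∈ V ∧ ‖d‖ = 1}) = -‖qbar‖ := by
  change qbar ∈ V.starProjection '' C at hqmem
  change ∀ q ∈ V.starProjection '' C, ‖qbar‖ ≤ ‖q‖ at hqmin
  obtain ⟨q₀, hq₀, hPq₀⟩ := hqmem
  have hqbarV : qbar ∈ V := hPq₀ ▸ V.starProjection_apply_mem q₀
  have hPC : Convex ℝ (V.starProjection '' C) := hCconv.linear_image V.starProjection.toLinearMap
  have hle (q : E) (hq : q ∈ C) : ‖qbar‖ ^ 2 ≤ ⟪qbar, q⟫ := by
    rw [← V.inner_starProjection_right_of_mem hqbarV]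
    exact norm_sq_le_inner_of_forall_norm_le hPC ⟨q₀, hq₀, hPq₀⟩ hqmin ⟨q, hq, rfl⟩
  have hself : ⟪qbar, q₀⟫ = ‖qbar‖ ^ 2 := by
    rw [← V.inner_starProjection_right_of_mem hqbarV, hPq₀, real_inner_self_eq_norm_sq]
  have hdstar : -(‖qbar‖⁻¹ • qbar) ∈ {d : E | d ∈ V ∧ ‖d‖ = 1} :=
    ⟨V.neg_mem (V.smul_mem _ hqbarV), by
      rw [norm_neg, norm_smul, norm_inv, norm_norm, inv_mul_cancel₀ (norm_ne_zero_iff.mpr hq0)]⟩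
  refine IsLeast.csInf_eq ⟨⟨_, hdstar, sSup_inner_image_neg_inv_norm_smul hq0 hle hq₀ hself⟩, ?_⟩
  rintro _ ⟨d, ⟨hdV, hd⟩, rfl⟩
  exact hPq₀ ▸ neg_norm_starProjection_le_sSup_inner_image V hCcomp hdV hd.le hq₀

/-- Lemma (`‖d̃*‖ = 𝒳̃(x̂)`): for a nonempty compact convex `C` in a
finite-dimensional real inner product space, with `P` the orthogonal
projection onto the subspace `V` and `q̄` the minimum-norm element of `P(C)`
(assumed nonzero), the minimum over unit vectors `d ∈ V` of
`max_{q ∈ C} ⟪d, q⟫` equals `-‖q̄‖`. -/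
theorem stmt14 {E : Type*} [NormedAddCommGroup E] [InnerProductSpace ℝ E]
    [FiniteDimensional ℝ E]
    (V : Submodule ℝ E) (C : Set E)
    (hCne : C.Nonempty) (hCcomp : IsCompact C) (hCconv : Convex ℝ C)
    (qbar : E)
    (hqmem : qbar ∈ (fun x => (V.orthogonalProjection x : E)) '' C)
    (hqmin : ∀ q ∈ (fun x => (V.orthogonalProjection x : E)) '' C,
      ‖qbar‖ ≤ ‖q‖)
    (hq0 : qbar ≠ 0) :
    sInf ((fun d => sSup ((fun q => (inner ℝ d q : ℝ)) '' C)) ''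
        {d : E | d ∈ V ∧ ‖d‖ = 1}) = -‖qbar‖ :=
  stmt14_general V C hCcomp hCconv qbar hqmem hqmin hq0
end
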